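/- There exist continuous real-valued potentials q1 and q2 on [0,1] with q1 ≠ q2 (they differ at some point) such that φ(1,ν;q1) = φ(1,ν;q2) for every ν ∈ ℝ; in particular, the data consisting of the boundary value of φ at x = 1 for all spectral parameters (equivalently, the flux measurement at x = 0 in the heat problem) does not determine the potential uniquely. -/

import Mathlib

/-!
The potential `q(x) = x` and its reflection `q(1 - x) = 1 - x` give the same `φ(1, ν)`.
In general, for a potential `q` and its reflection `q̃(x) = q(1 - x)`, both `φ(x, ν; q)` and
`φ(1 - x, ν; q̃)` solve `y'' = (q - ν) y`, so their Wronskian is constant on `[0, 1]`.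
Its value at `0` is `-φ(1, ν; q̃)` and its value at `1` is `-φ(1, ν; q)`.
-/

/-- `IsSLSolution q nu f f'` : `f` solves `-f'' + q f = nu * f` on `[0,1]`
with `f 0 = 0`, `f' 0 = 1`, where `f'` is the derivative of `f` on `[0,1]`. -/
def IsSLSolution (q : ℝ → ℝ) (ν : ℝ) (φ φ' : ℝ → ℝ) : Prop :=
  (∀ x ∈ Set.Icc (0:ℝ) 1, HasDerivAt φ (φ' x) x) ∧
  (∀ x ∈ Set.Icc (0:ℝ) 1, HasDerivAt φ' (q x * φ x - ν * φ x) x) ∧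
  φ 0 = 0 ∧ φ' 0 = 1

open Set

theorem wronskian_eq_of_hasDerivAt {p f f' g g' : ℝ → ℝ} {a b : ℝ} (hab : a ≤ b)
    (hf : ∀ x ∈ Icc a b, HasDerivAt f (f' x) x) (hf' : ∀ x ∈ Icc a b, HasDerivAt f' (p x * f x) x)
    (hg : ∀ x ∈ Icc a b, HasDerivAt g (g' x) x) (hg' : ∀ x ∈ Icc a b, HasDerivAt g' (p x * g x) x) :
    f b * g' b - f' b * g b = f a * g' a - f' a * g a := by
  set W : ℝ → ℝ := fun x ↦ f x * g' x - f' x * g x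
  have hW : ∀ x ∈ Icc a b, HasDerivAt W 0 x := fun x hx ↦
    (((hf x hx).mul (hg' x hx)).sub ((hf' x hx).mul (hg x hx))).congr_deriv (by ring)
  exact constant_of_has_deriv_right_zero (fun x hx ↦ (hW x hx).continuousAt.continuousWithinAt)
    (fun x hx ↦ (hW x (Ico_subset_Icc_self hx)).hasDerivWithinAt) b ⟨hab, le_rfl⟩

namespace IsSLSolution

variable {q : ℝ → ℝ} {ν : ℝ} {φ φ' : ℝ → ℝ}

theorem hasDerivAt_deriv (h : IsSLSolution q ν φ φ') {x : ℝ} (hx : x ∈ Icc (0 : ℝ) 1) :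
    HasDerivAt φ' ((q x - ν) * φ x) x :=
  (h.2.1 x hx).congr_deriv (sub_mul _ _ _).symm

theorem hasDerivAt_comp_one_sub (h : IsSLSolution q ν φ φ') {x : ℝ} (hx : x ∈ Icc (0 : ℝ) 1) :
    HasDerivAt (fun y ↦ φ (1 - y)) (-φ' (1 - x)) x :=
  (h.1 _ (Icc.mem_iff_one_sub_mem.mp hx)).comp_const_sub 1 x

theorem hasDerivAt_neg_deriv_comp_one_sub (h : IsSLSolution (fun x ↦ q (1 - x)) ν φ φ') {x : ℝ}
    (hx : x ∈ Icc (0 : ℝ) 1) :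
    HasDerivAt (fun y ↦ -φ' (1 - y)) ((q x - ν) * φ (1 - x)) x := by
  have h' := ((h.hasDerivAt_deriv (Icc.mem_iff_one_sub_mem.mp hx)).comp_const_sub 1 x).neg
  rwa [sub_sub_cancel, neg_neg] at h'

theorem apply_one_eq_of_reflect (h : IsSLSolution q ν φ φ') {ψ ψ' : ℝ → ℝ}
    (hψ : IsSLSolution (fun x ↦ q (1 - x)) ν ψ ψ') : φ 1 = ψ 1 := by
  have hW := wronskian_eq_of_hasDerivAt zero_le_one h.1 (fun x hx ↦ h.hasDerivAt_deriv hx)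
    (fun x hx ↦ hψ.hasDerivAt_comp_one_sub hx) (fun x hx ↦ hψ.hasDerivAt_neg_deriv_comp_one_sub hx)
  obtain ⟨-, -, hφ0, hφ'0⟩ := h
  obtain ⟨-, -, hψ0, hψ'0⟩ := hψ
  simp only [sub_zero, sub_self, hφ0, hφ'0, hψ0, hψ'0] at hW
  linarith

end IsSLSolution

/-- there are two continuous potentials on `[0,1]`, differing at some
point, whose solutions `φ(·,ν;q)` (with `φ(0)=0`, `φ'(0)=1`) have the same value at
`x = 1` for every spectral parameter `ν ∈ ℝ`. -/
theorem phi_at_one_does_not_determine_potential :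
    ∃ q1 q2 : ℝ → ℝ,
      ContinuousOn q1 (Set.Icc 0 1) ∧ ContinuousOn q2 (Set.Icc 0 1) ∧
      (∃ x ∈ Set.Icc (0:ℝ) 1, q1 x ≠ q2 x) ∧
      ∀ ν : ℝ, ∀ φ1 φ1' φ2 φ2' : ℝ → ℝ,
        IsSLSolution q1 ν φ1 φ1' → IsSLSolution q2 ν φ2 φ2' → φ1 1 = φ2 1 :=
  ⟨fun x ↦ x, fun x ↦ 1 - x, continuousOn_id, (continuous_const.sub continuous_id).continuousOn,
    ⟨0, ⟨le_rfl, zero_le_one⟩, by norm_num⟩,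
    fun _ _ _ _ _ h1 h2 ↦ h1.apply_one_eq_of_reflect h2⟩
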